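/- Let w be a permutation of {1,…,n+1}, let j ∈ {1,…,n} with ℓ(s_j∘w) = ℓ(w) + 1, and set q_j = w^{-1}(j). Then the pair (j+1, q_j) is (s_j∘w)-relevant, the pair (j+1, q_j) is not w-relevant, and r^{s_j∘w}_{j+1, q_j} ≤ j. -/

import Mathlib

/-- `r^w_{p,q} = #{k : 1 ≤ k ≤ q, w(k) ≤ p}` for a permutation `w` of `{1, …, n+1}`
(realised as a permutation of `Fin (n+1)`, with `k ∈ Fin (n+1)` corresponding to the
1-indexed entry `k+1`). The conventions `r^w_{0,q} = r^w_{p,0} = 0` hold automatically. -/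
def rnum (n : ℕ) (w : Equiv.Perm (Fin (n+1))) (p q : ℕ) : ℕ :=
  ((Finset.univ : Finset (Fin (n+1))).filter
    (fun k : Fin (n+1) => (k : ℕ) + 1 ≤ q ∧ (w k : ℕ) + 1 ≤ p)).card

/-- The length `ℓ(w)`: the number of inversions of `w`. -/
def pLen (n : ℕ) (w : Equiv.Perm (Fin (n+1))) : ℕ :=
  ((Finset.univ : Finset (Fin (n+1) × Fin (n+1))).filter
    (fun ij : Fin (n+1) × Fin (n+1) => ij.1 < ij.2 ∧ w ij.2 < w ij.1)).card

/-- The simple transposition `s_i` swapping `i` and `i+1` (1-indexed), as a permutation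
of `Fin (n+1)`; it is defined to be the identity for `i` outside `{1, …, n}`. -/
def sT (n : ℕ) (i : ℕ) : Equiv.Perm (Fin (n+1)) :=
  if h : 1 ≤ i ∧ i ≤ n then Equiv.swap ⟨i - 1, by omega⟩ ⟨i, by omega⟩ else 1

/-- The finite set of `w`-relevant pairs `(p,q)`: `1 ≤ p ≤ n+1`, `1 ≤ q ≤ n`,
`r^w_{p,q} < p`, `r^w_{p,q} > r^w_{p-1,q}` and `r^w_{p,q} > r^w_{p,q-1}`. -/
def relevantFinset (n : ℕ) (w : Equiv.Perm (Fin (n+1))) : Finset (ℕ × ℕ) :=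
  ((Finset.Icc 1 (n+1)) ×ˢ (Finset.Icc 1 n)).filter
    (fun pq => rnum n w pq.1 pq.2 < pq.1 ∧
      rnum n w (pq.1 - 1) pq.2 < rnum n w pq.1 pq.2 ∧
      rnum n w pq.1 (pq.2 - 1) < rnum n w pq.1 pq.2)

/-- `L = [i_N, …, i_1]` is a reduced decomposition of `w`: all the letters lie in
`{1, …, n}`, `w = s_{i_N} ∘ ⋯ ∘ s_{i_1}`, and `N = ℓ(w)`. -/
def IsReducedWord (n : ℕ) (w : Equiv.Perm (Fin (n+1))) (L : List ℕ) : Prop :=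
  (∀ i ∈ L, 1 ≤ i ∧ i ≤ n) ∧ (L.map (sT n)).prod = w ∧ L.length = pLen n w

/-- A reduced decomposition `L = [i_N, …, i_1]` of `w` is geometrically compatible if the
multiset of its letters equals the multiset of values `r^w_{p,q}` over the `w`-relevant
pairs `(p,q)`. -/
def IsGeomCompatible (n : ℕ) (w : Equiv.Perm (Fin (n+1))) (L : List ℕ) : Prop :=
  IsReducedWord n w L ∧
    (L : Multiset ℕ) = (relevantFinset n w).val.map (fun pq => rnum n w pq.1 pq.2)


/-- If `ℓ(s_j ∘ w) = ℓ(w) + 1` and `q_j = w⁻¹(j)` (1-indexed), then the pair `(j+1, q_j)`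
is `(s_j ∘ w)`-relevant, it is not `w`-relevant, and `r^{s_j ∘ w}_{j+1, q_j} ≤ j`. -/
theorem relevant_pair_of_mul_simple (n : ℕ) (w : Equiv.Perm (Fin (n+1))) (j : ℕ)
    (hj1 : 1 ≤ j) (hj2 : j ≤ n) (qj : ℕ)
    (hqj : qj = ((w⁻¹ ⟨j - 1, by omega⟩ : Fin (n+1)) : ℕ) + 1)
    (hlen : pLen n (sT n j * w) = pLen n w + 1) :
    (j+1, qj) ∈ relevantFinset n (sT n j * w) ∧
    (j+1, qj) ∉ relevantFinset n w ∧
    rnum n (sT n j * w) (j+1) qj ≤ j := by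
  have hja : j - 1 < n + 1 := by omega
  have hjb : j < n + 1 := by omega
  set a : Fin (n+1) := ⟨j-1, hja⟩ with ha
  set b : Fin (n+1) := ⟨j, hjb⟩ with hb
  set v : Equiv.Perm (Fin (n+1)) := sT n j * w with hvdef
  set c : Fin (n+1) := w⁻¹ a with hc
  set d : Fin (n+1) := w⁻¹ b with hd
  have hqj' : qj = (c : ℕ) + 1 := hqj
  have hwc : w c = a := Equiv.apply_symm_apply w a
  have hwd : w d = b := Equiv.apply_symm_apply w b
  have hab : a ≠ b := by
    rw [ha, hb]
    intro h
    rw [Fin.mk.injEq] at h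
    omega
  have hsT : sT n j = Equiv.swap a b := by
    rw [sT, dif_pos ⟨hj1, hj2⟩]
  -- key value description of v
  have hvk : ∀ k : Fin (n+1), (v k : ℕ) =
      if k = c then j else if k = d then j - 1 else (w k : ℕ) := by
    intro k
    rw [hvdef, hsT]
    simp only [Equiv.Perm.mul_apply]
    rcases eq_or_ne k c with h | h
    · rw [if_pos h, h, hwc, Equiv.swap_apply_left]
    · rcases eq_or_ne k d with h2 | h2
      · rw [if_neg h, if_pos h2, h2, hwd, Equiv.swap_apply_right]
      · have h' : w k ≠ a := fun hh => h (by rw [← hwc] at hh; exact w.injective hh)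
        have h2' : w k ≠ b := fun hh => h2 (by rw [← hwd] at hh; exact w.injective hh)
        rw [if_neg h, if_neg h2, Equiv.swap_apply_of_ne_of_ne h' h2']
  have hwka : ∀ k : Fin (n+1), ((w k : ℕ) = j - 1 ↔ k = c) := by
    intro k
    constructor
    · intro h
      have : w k = a := Fin.ext h
      rw [← hwc] at this; exact w.injective this
    · intro h; rw [h, hwc]
  have hwkb : ∀ k : Fin (n+1), ((w k : ℕ) = j ↔ k = d) := by
    intro k
    constructor
    · intro h
      have : w k = b := Fin.ext h
      rw [← hwd] at this; exact w.injective this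
    · intro h; rw [h, hwd]
  have hcd : c ≠ d := fun h => hab (by rw [← hwc, ← hwd, h])
  -- the key order fact from hlen
  have hlt : (c : ℕ) < (d : ℕ) := by
    by_contra hge
    push_neg at hge
    have hdc : (d : ℕ) < (c : ℕ) :=
      lt_of_le_of_ne hge (fun h => hcd (Fin.ext h.symm))
    have hsub : ((Finset.univ : Finset (Fin (n+1) × Fin (n+1))).filter
        (fun ij => ij.1 < ij.2 ∧ v ij.2 < v ij.1)) ⊆
        ((Finset.univ : Finset (Fin (n+1) × Fin (n+1))).filter
        (fun ij => ij.1 < ij.2 ∧ w ij.2 < w ij.1)) := by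
      intro ij hij
      simp only [Finset.mem_filter, Finset.mem_univ, true_and] at hij ⊢
      obtain ⟨h12, hvv⟩ := hij
      refine ⟨h12, ?_⟩
      have hne : ij.1 ≠ ij.2 := ne_of_lt h12
      have h12' : (ij.1 : ℕ) < (ij.2 : ℕ) := h12
      rw [Fin.lt_def] at hvv ⊢
      rw [hvk ij.1, hvk ij.2] at hvv
      have haval : (a : ℕ) = j - 1 := rfl
      have hbval : (b : ℕ) = j := rfl
      by_cases h1c : ij.1 = c
      · rw [if_pos h1c] at hvv
        have h2c : ij.2 ≠ c := fun h => hne (h1c.trans h.symm)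
        rw [if_neg h2c] at hvv
        by_cases h2d : ij.2 = d
        · exfalso
          have hc' : (ij.1 : ℕ) = (c : ℕ) := by rw [h1c]
          have hd' : (ij.2 : ℕ) = (d : ℕ) := by rw [h2d]
          omega
        · rw [if_neg h2d] at hvv
          have hnya : (w ij.2 : ℕ) ≠ j - 1 := fun h => h2c ((hwka ij.2).1 h)
          rw [h1c, hwc, haval]
          omega
      · rw [if_neg h1c] at hvv
        by_cases h1d : ij.1 = d
        · rw [if_pos h1d] at hvv
          by_cases h2c : ij.2 = c
          · rw [if_pos h2c] at hvv; omega
          · have h2d : ij.2 ≠ d := fun h => hne (h1d.trans h.symm)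
            rw [if_neg h2c, if_neg h2d] at hvv
            rw [h1d, hwd, hbval]
            omega
        · rw [if_neg h1d] at hvv
          have hnxa : (w ij.1 : ℕ) ≠ j - 1 := fun h => h1c ((hwka ij.1).1 h)
          have hnxb : (w ij.1 : ℕ) ≠ j := fun h => h1d ((hwkb ij.1).1 h)
          by_cases h2c : ij.2 = c
          · rw [if_pos h2c] at hvv
            rw [h2c, hwc, haval]
            omega
          · by_cases h2d : ij.2 = d
            · rw [if_neg h2c, if_pos h2d] at hvv
              rw [h2d, hwd, hbval]
              omega
            · rw [if_neg h2c, if_neg h2d] at hvv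
              exact hvv
    have : pLen n v ≤ pLen n w := Finset.card_le_card hsub
    rw [hlen] at this
    omega
  -- basic bounds
  have hdn : (d : ℕ) < n + 1 := d.isLt
  have hqn : qj ≤ n := by omega
  have hq1 : 1 ≤ qj := by omega
  -- membership test: k + 1 ≤ qj ↔ k ≤ c
  -- b does not occur among positions ≤ c for w
  have hwkb' : ∀ k : Fin (n+1), (k : ℕ) + 1 ≤ qj → (w k : ℕ) ≠ j := by
    intro k hk h
    have : k = d := (hwkb k).1 h
    subst this; omega
  -- F1 : rnum v (j+1) qj = rnum w (j+1) qj
  have F1 : rnum n v (j+1) qj = rnum n w (j+1) qj := by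
    unfold rnum
    congr 1
    apply Finset.filter_congr
    intro k _
    have hval := hvk k
    have e1 := hwka k
    have e2 := hwkb k
    constructor
    · rintro ⟨hk, hv⟩
      refine ⟨hk, ?_⟩
      by_cases h1 : k = c
      · have : (w k : ℕ) = j - 1 := e1.2 h1; omega
      · by_cases h2 : k = d
        · have : (w k : ℕ) = j := e2.2 h2; omega
        · rw [if_neg h1, if_neg h2] at hval; omega
    · rintro ⟨hk, hv⟩
      refine ⟨hk, ?_⟩
      by_cases h1 : k = c
      · rw [if_pos h1] at hval; omega
      · by_cases h2 : k = d
        · rw [if_neg h1, if_pos h2] at hval; omega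
        · rw [if_neg h1, if_neg h2] at hval; omega
  -- F4 : rnum w (j+1) qj = rnum w j qj
  have F4 : rnum n w (j+1) qj = rnum n w j qj := by
    unfold rnum
    congr 1
    apply Finset.filter_congr
    intro k _
    constructor
    · rintro ⟨hk, hv⟩
      have := hwkb' k hk
      exact ⟨hk, by omega⟩
    · rintro ⟨hk, hv⟩
      exact ⟨hk, by omega⟩
  -- F5 : rnum w j qj ≤ j
  have F5 : rnum n w j qj ≤ j := by
    unfold rnum
    have : ((Finset.univ : Finset (Fin (n+1))).filter
        (fun k : Fin (n+1) => (k : ℕ) + 1 ≤ qj ∧ (w k : ℕ) + 1 ≤ j)).card ≤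
        (Finset.Iio b).card := by
      apply Finset.card_le_card_of_injOn w
      · intro k hk
        simp only [Finset.mem_coe, Finset.mem_filter, Finset.mem_univ, true_and] at hk
        simp only [Finset.mem_coe, Finset.mem_Iio, Fin.lt_def, hb]
        omega
      · intro x _ y _ h
        exact w.injective h
    rwa [Fin.card_Iio] at this
  -- F2 : rnum v j qj + 1 = rnum w j qj
  have F2 : rnum n v j qj + 1 = rnum n w j qj := by
    unfold rnum
    have hset : ((Finset.univ : Finset (Fin (n+1))).filter
        (fun k : Fin (n+1) => (k : ℕ) + 1 ≤ qj ∧ (v k : ℕ) + 1 ≤ j)) =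
        (((Finset.univ : Finset (Fin (n+1))).filter
        (fun k : Fin (n+1) => (k : ℕ) + 1 ≤ qj ∧ (w k : ℕ) + 1 ≤ j)).erase c) := by
      ext k
      simp only [Finset.mem_filter, Finset.mem_univ, true_and, Finset.mem_erase]
      have hval := hvk k
      constructor
      · rintro ⟨hk, hv⟩
        by_cases h1 : k = c
        · rw [if_pos h1] at hval; omega
        · by_cases h2 : k = d
          · subst h2; omega
          · rw [if_neg h1, if_neg h2] at hval
            exact ⟨h1, hk, by omega⟩
      · rintro ⟨h1, hk, hv⟩
        refine ⟨hk, ?_⟩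
        have h2 : k ≠ d := by
          intro h; subst h; omega
        rw [if_neg h1, if_neg h2] at hval; omega
    rw [hset]
    apply Finset.card_erase_add_one
    simp only [Finset.mem_filter, Finset.mem_univ, true_and]
    constructor
    · omega
    · have : (w c : ℕ) = j - 1 := by rw [hwc]
      omega
  -- F3 : rnum v (j+1) (qj - 1) + 1 = rnum v (j+1) qj
  have F3 : rnum n v (j+1) (qj - 1) + 1 = rnum n v (j+1) qj := by
    unfold rnum
    have hset : ((Finset.univ : Finset (Fin (n+1))).filter
        (fun k : Fin (n+1) => (k : ℕ) + 1 ≤ qj ∧ (v k : ℕ) + 1 ≤ j + 1)) =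
        insert c (((Finset.univ : Finset (Fin (n+1))).filter
        (fun k : Fin (n+1) => (k : ℕ) + 1 ≤ qj - 1 ∧ (v k : ℕ) + 1 ≤ j + 1))) := by
      ext k
      simp only [Finset.mem_filter, Finset.mem_univ, true_and, Finset.mem_insert]
      constructor
      · rintro ⟨hk, hv⟩
        by_cases h1 : k = c
        · exact Or.inl h1
        · refine Or.inr ⟨?_, hv⟩
          have : (k : ℕ) ≠ (c : ℕ) := fun h => h1 (Fin.ext h)
          omega
      · rintro (h | ⟨hk, hv⟩)
        · subst h
          have hval := hvk c
          rw [if_pos rfl] at hval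
          exact ⟨by omega, by omega⟩
        · exact ⟨by omega, hv⟩
    rw [hset, Finset.card_insert_of_notMem]
    simp only [Finset.mem_filter, Finset.mem_univ, true_and, not_and]
    intro h
    omega
  -- assemble
  have hr : rnum n v (j+1) qj = rnum n w j qj := by rw [F1, F4]
  have hrle : rnum n v (j+1) qj ≤ j := by omega
  refine ⟨?_, ?_, hrle⟩
  · simp only [relevantFinset, Finset.mem_filter, Finset.mem_product, Finset.mem_Icc]
    refine ⟨⟨⟨by omega, by omega⟩, by omega, hqn⟩, by omega, ?_, by omega⟩
    have : j + 1 - 1 = j := by omega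
    rw [this]
    omega
  · simp only [relevantFinset, Finset.mem_filter, Finset.mem_product, Finset.mem_Icc]
    rintro ⟨-, -, h2, -⟩
    have : j + 1 - 1 = j := by omega
    rw [this] at h2
    omega
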